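/- arXiv:1603.05236 — 2 statements merged into one kernel-verified Lean document; each statement's English description precedes it below -/
import Mathlib

section
/- Let (X,d) be a length metric space, let x, y ∈ X be distinct points, and let 0 < r < d(x,y). Assume that the closed ball of radius 2r around x is compact. Then there exists a point z ∈ X with d(x,z) = r and d(x,z) + d(z,y) = d(x,y). -/
/-- A metric space is a *length space* if the distance between any two points equals the
infimum of the lengths of continuous paths joining them. -/
def IsLengthSpace (X : Type*) [MetricSpace X] : Prop :=
  ∀ x y : X, ENNReal.ofReal (dist x y) = ⨅ γ : Path x y, eVariationOn (fun t => γ t) Set.univ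

/-! The sphere `S(x, r)` lies in the compact ball `B̄(x, 2r)`, so `z ↦ d(x,z) + d(z,y)` attains its
minimum on it. Every path from `x` to `y` crosses `S(x, r)`, and at a crossing point this function
is at most the length of the path; taking paths of length `< d(x,y) + ε`, the minimum is
`d(x,y)`. -/

open Set Metric unitInterval

theorem eVariationOn.edist_add_edist_le {α E : Type*} [LinearOrder α] [PseudoEMetricSpace E]
    (f : α → E) {s : Set α} {a b c : α} (hab : a ≤ b) (hbc : b ≤ c)
    (ha : a ∈ s) (hb : b ∈ s) (hc : c ∈ s) :
    edist (f a) (f b) + edist (f b) (f c) ≤ eVariationOn f s :=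
  calc edist (f a) (f b) + edist (f b) (f c)
      ≤ eVariationOn f (s ∩ Icc a b) + eVariationOn f (s ∩ Icc b c) :=
        add_le_add (edist_le f ⟨ha, le_rfl, hab⟩ ⟨hb, hab, le_rfl⟩)
          (edist_le f ⟨hb, le_rfl, hbc⟩ ⟨hc, hbc, le_rfl⟩)
    _ = eVariationOn f (s ∩ Icc a c) := Icc_add_Icc f hab hbc hb
    _ ≤ eVariationOn f s := mono f inter_subset_left

theorem Path.edist_add_edist_le_eVariationOn {X : Type*} [PseudoMetricSpace X] {x y : X}
    (γ : Path x y) (t : I) :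
    edist x (γ t) + edist (γ t) y ≤ eVariationOn (fun s => γ s) univ := by
  simpa only [γ.source, γ.target] using
    eVariationOn.edist_add_edist_le (fun s => γ s) nonneg' le_one'
      (mem_univ 0) (mem_univ t) (mem_univ 1)

namespace IsLengthSpace

variable {X : Type*} [MetricSpace X]

theorem exists_path_eVariationOn_lt (hX : IsLengthSpace X) (x y : X) {ε : ℝ} (hε : 0 < ε) :
    ∃ γ : Path x y, eVariationOn (fun t => γ t) univ < ENNReal.ofReal (dist x y + ε) := by
  refine iInf_lt_iff.1 ?_
  rw [← hX x y]
  exact ENNReal.ofReal_lt_ofReal_iff'.2 ⟨by linarith, by linarith [dist_nonneg (x := x) (y := y)]⟩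

theorem exists_dist_eq_dist_add_dist_lt (hX : IsLengthSpace X) {x y : X} {r ε : ℝ}
    (hr : 0 ≤ r) (hrd : r ≤ dist x y) (hε : 0 < ε) :
    ∃ z, dist x z = r ∧ dist x z + dist z y < dist x y + ε := by
  obtain ⟨γ, hγ⟩ := hX.exists_path_eVariationOn_lt x y hε
  obtain ⟨t, ht⟩ : r ∈ range fun t : I => dist x (γ t) :=
    intermediate_value_univ 0 1 (by fun_prop) (by simpa using ⟨hr, hrd⟩)
  refine ⟨γ t, ht, ?_⟩
  have hlen := (γ.edist_add_edist_le_eVariationOn t).trans_lt hγ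
  rwa [edist_dist, edist_dist, ← ENNReal.ofReal_add dist_nonneg dist_nonneg,
    ENNReal.ofReal_lt_ofReal_iff (by positivity)] at hlen

end IsLengthSpace

theorem exists_intermediate_point_of_lengthSpace_general
    {X : Type*} [MetricSpace X] (hX : IsLengthSpace X)
    (x y : X) (r : ℝ) (hr : 0 < r) (hrd : r < dist x y)
    (hcomp : IsCompact (Metric.closedBall x (2 * r))) :
    ∃ z : X, dist x z = r ∧ dist x z + dist z y = dist x y := by
  have hnear (ε : ℝ) (hε : 0 < ε) : ∃ z, dist x z = r ∧ dist x z + dist z y < dist x y + ε :=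
    hX.exists_dist_eq_dist_add_dist_lt hr.le hrd.le hε
  have hsphere : IsCompact (sphere x r) :=
    hcomp.of_isClosed_subset isClosed_sphere
      (sphere_subset_closedBall.trans (closedBall_subset_closedBall (by linarith)))
  obtain ⟨w, hw, -⟩ := hnear 1 one_pos
  obtain ⟨z, hz, hmin⟩ := hsphere.exists_isMinOn ⟨w, mem_sphere'.2 hw⟩
    (Continuous.continuousOn (f := fun z => dist x z + dist z y) (by fun_prop))
  refine ⟨z, mem_sphere'.1 hz, le_antisymm (le_of_forall_pos_lt_add fun ε hε => ?_)
    (dist_triangle x z y)⟩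
  obtain ⟨w, hw, hlt⟩ := hnear ε hε
  exact (hmin (mem_sphere'.2 hw)).trans_lt hlt

theorem exists_intermediate_point_of_lengthSpace
    {X : Type*} [MetricSpace X] (hX : IsLengthSpace X)
    (x y : X) (hxy : x ≠ y) (r : ℝ) (hr : 0 < r) (hrd : r < dist x y)
    (hcomp : IsCompact (Metric.closedBall x (2 * r))) :
    ∃ z : X, dist x z = r ∧ dist x z + dist z y = dist x y :=
  exists_intermediate_point_of_lengthSpace_general hX x y r hr hrd hcomp
end

section
/- Let (X,d) be a metric space equipped with a Borel measure μ, let x ∈ X, and suppose there is a constant C ≥ 1 such that μ(B(x,s)) ≤ C·e^{C·s} for all s > 0. Then for every T > 0 there is a constant C′ = C′(C,T) < ∞ such that for all 0 < t ≤ T and all r ≥ 1: ∫_{X ∖ B(x,r)} exp(−d(x,y)²/(2t)) dμ(y) ≤ C′ · exp(−r²/(4t)). -/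
/-!
Split `exp (-d²/(2t))` as `exp (-d²/(4t)) * exp (-d²/(4t))`. Outside `B(x, r)` the first factor
is at most `exp (-r²/(4t))`, and for `t ≤ T` the second is at most the fixed Gaussian weight
`exp (-d²/(4T))`. So `C'` can be any bound for `∫ exp (-d(x,y)²/(4T)) dμ(y)`, which is finite
because on the annulus `n ≤ d < n + 1` the weight is `exp (-n²/(4T))` while the mass is
`C e^{C(n+1)}`, and Gaussian decay beats exponential growth.
-/

open MeasureTheory Metric

namespace Real

lemma mul_sub_mul_sq_le {a : ℝ} (ha : 0 < a) (b s : ℝ) : b * s - a * s ^ 2 ≤ b ^ 2 / (4 * a) := by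
  rw [le_div_iff₀ (by positivity)]
  nlinarith [sq_nonneg (b - 2 * a * s)]

lemma summable_exp_mul_sub_mul_sq {a : ℝ} (ha : 0 < a) (b : ℝ) :
    Summable fun n : ℕ ↦ exp (b * n - a * n ^ 2) := by
  refine .of_nonneg_of_le (fun _ ↦ (exp_pos _).le) (fun n ↦ ?_)
    (summable_exp_neg_nat.mul_left (exp ((b + 1) ^ 2 / (4 * a))))
  rw [← exp_add, exp_le_exp]
  linarith [mul_sub_mul_sq_le ha (b + 1) n]

lemma exp_neg_sq_div_two_mul_le {r d t T : ℝ} (hr : 0 ≤ r) (hrd : r ≤ d) (ht : 0 < t)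
    (htT : t ≤ T) : exp (-d ^ 2 / (2 * t)) ≤ exp (-r ^ 2 / (4 * t)) * exp (-(4 * T)⁻¹ * d ^ 2) := by
  have hsq : r ^ 2 / (4 * t) ≤ d ^ 2 / (4 * t) := by gcongr
  have hT : d ^ 2 / (4 * T) ≤ d ^ 2 / (4 * t) := by gcongr
  have hsplit : d ^ 2 / (2 * t) = d ^ 2 / (4 * t) + d ^ 2 / (4 * t) := by ring
  rw [← exp_add, exp_le_exp, neg_div, neg_div, neg_mul, ← div_eq_inv_mul]
  linarith

end Real

section VolumeGrowth

variable {X : Type*} [PseudoMetricSpace X]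

lemma Metric.iUnion_ball_nat_succ_diff_ball (x : X) :
    ⋃ n : ℕ, ball x (n + 1) \ ball x n = Set.univ := by
  refine Set.eq_univ_of_forall fun y ↦ Set.mem_iUnion.2 ⟨⌊dist y x⌋₊, ?_, ?_⟩
  · exact mem_ball.2 (Nat.lt_floor_add_one _)
  · exact fun h ↦ (mem_ball.1 h).not_ge (Nat.floor_le dist_nonneg)

variable [MeasurableSpace X] {μ : Measure X} {x : X} {C : ℝ}

lemma setLIntegral_annulus_exp_neg_mul_dist_sq_le {a : ℝ} (ha : 0 ≤ a)
    (hvol : ∀ s : ℝ, 0 < s → μ (ball x s) ≤ ENNReal.ofReal (C * Real.exp (C * s))) (n : ℕ) :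
    ∫⁻ y in ball x (n + 1) \ ball x n, ENNReal.ofReal (Real.exp (-a * dist x y ^ 2)) ∂μ
      ≤ ENNReal.ofReal C * ENNReal.ofReal (Real.exp C * Real.exp (C * n - a * n ^ 2)) := by
  have hweight : ∀ y ∈ ball x (n + 1) \ ball x n,
      ENNReal.ofReal (Real.exp (-a * dist x y ^ 2)) ≤ ENNReal.ofReal (Real.exp (-a * n ^ 2)) := by
    rintro y ⟨-, hy⟩
    rw [mem_ball, not_lt, dist_comm] at hy
    exact ENNReal.ofReal_le_ofReal <| Real.exp_le_exp.2 <|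
      mul_le_mul_of_nonpos_left (pow_le_pow_left₀ n.cast_nonneg hy 2) (neg_nonpos.2 ha)
  calc ∫⁻ y in ball x (n + 1) \ ball x n, ENNReal.ofReal (Real.exp (-a * dist x y ^ 2)) ∂μ
      ≤ ENNReal.ofReal (Real.exp (-a * n ^ 2)) * μ (ball x (n + 1) \ ball x n) := by
        rw [← setLIntegral_const]
        exact setLIntegral_mono measurable_const hweight
    _ ≤ ENNReal.ofReal (Real.exp (-a * n ^ 2)) * ENNReal.ofReal (C * Real.exp (C * (n + 1))) := by
        gcongr
        exact (measure_mono Set.sdiff_subset).trans (hvol _ (by positivity))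
    _ = ENNReal.ofReal C * ENNReal.ofReal (Real.exp C * Real.exp (C * n - a * n ^ 2)) := by
        rw [mul_comm, ENNReal.ofReal_mul' (by positivity), mul_assoc,
          ← ENNReal.ofReal_mul (by positivity)]
        congr 2
        rw [← Real.exp_add, ← Real.exp_add]
        ring_nf

lemma lintegral_exp_neg_mul_dist_sq_lt_top {a : ℝ} (ha : 0 < a)
    (hvol : ∀ s : ℝ, 0 < s → μ (ball x s) ≤ ENNReal.ofReal (C * Real.exp (C * s))) :
    ∫⁻ y, ENNReal.ofReal (Real.exp (-a * dist x y ^ 2)) ∂μ < ⊤ := by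
  have hsum := (Real.summable_exp_mul_sub_mul_sq ha C).mul_left (Real.exp C)
  calc ∫⁻ y, ENNReal.ofReal (Real.exp (-a * dist x y ^ 2)) ∂μ
      = ∫⁻ y in ⋃ n : ℕ, ball x (n + 1) \ ball x n,
          ENNReal.ofReal (Real.exp (-a * dist x y ^ 2)) ∂μ := by
        rw [iUnion_ball_nat_succ_diff_ball, Measure.restrict_univ]
    _ ≤ ∑' n : ℕ, ∫⁻ y in ball x (n + 1) \ ball x n,
          ENNReal.ofReal (Real.exp (-a * dist x y ^ 2)) ∂μ := lintegral_iUnion_le _ _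
    _ ≤ ∑' n : ℕ, ENNReal.ofReal C * ENNReal.ofReal (Real.exp C * Real.exp (C * n - a * n ^ 2)) :=
        ENNReal.tsum_le_tsum (setLIntegral_annulus_exp_neg_mul_dist_sq_le ha.le hvol)
    _ = ENNReal.ofReal C *
          ENNReal.ofReal (∑' n : ℕ, Real.exp C * Real.exp (C * n - a * n ^ 2)) := by
        rw [ENNReal.tsum_mul_left, ENNReal.ofReal_tsum_of_nonneg (fun _ ↦ by positivity) hsum]
    _ < ⊤ := ENNReal.mul_lt_top ENNReal.ofReal_lt_top ENNReal.ofReal_lt_top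

end VolumeGrowth

theorem gaussian_tail_of_exponential_volume_growth_general
    {X : Type*} [MetricSpace X] [MeasurableSpace X] [OpensMeasurableSpace X]
    (μ : Measure X) (x : X) (C : ℝ)
    (hvol : ∀ s : ℝ, 0 < s → μ (Metric.ball x s) ≤ ENNReal.ofReal (C * Real.exp (C * s)))
    (T : ℝ) (hT : 0 < T) :
    ∃ C' : ℝ, 0 < C' ∧ ∀ t : ℝ, 0 < t → t ≤ T → ∀ r : ℝ, 1 ≤ r →
      ∫⁻ y in (Metric.ball x r)ᶜ, ENNReal.ofReal (Real.exp (-(dist x y) ^ 2 / (2 * t))) ∂μ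
        ≤ ENNReal.ofReal (C' * Real.exp (-r ^ 2 / (4 * t))) := by
  set I := ∫⁻ y, ENNReal.ofReal (Real.exp (-(4 * T)⁻¹ * dist x y ^ 2)) ∂μ
  have hI : I ≠ ⊤ := (lintegral_exp_neg_mul_dist_sq_lt_top (by positivity) hvol).ne
  refine ⟨I.toReal + 1, by positivity, fun t ht htT r hr ↦ ?_⟩
  have hI_le : I ≤ ENNReal.ofReal (I.toReal + 1) :=
    (ENNReal.le_ofReal_iff_toReal_le hI (by positivity)).2 (by linarith)
  calc ∫⁻ y in (ball x r)ᶜ, ENNReal.ofReal (Real.exp (-(dist x y) ^ 2 / (2 * t))) ∂μ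
      ≤ ∫⁻ y in (ball x r)ᶜ, ENNReal.ofReal (Real.exp (-r ^ 2 / (4 * t))) *
          ENNReal.ofReal (Real.exp (-(4 * T)⁻¹ * dist x y ^ 2)) ∂μ := by
        refine setLIntegral_mono' measurableSet_ball.compl fun y hy ↦ ?_
        rw [Set.mem_compl_iff, mem_ball, not_lt, dist_comm] at hy
        rw [← ENNReal.ofReal_mul (Real.exp_nonneg _)]
        exact ENNReal.ofReal_le_ofReal (Real.exp_neg_sq_div_two_mul_le (by linarith) hy ht htT)
    _ ≤ ENNReal.ofReal (Real.exp (-r ^ 2 / (4 * t))) * I := by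
        rw [lintegral_const_mul' _ _ ENNReal.ofReal_ne_top]
        gcongr
        exact setLIntegral_le_lintegral _ _
    _ ≤ ENNReal.ofReal (Real.exp (-r ^ 2 / (4 * t))) * ENNReal.ofReal (I.toReal + 1) := by gcongr
    _ = ENNReal.ofReal ((I.toReal + 1) * Real.exp (-r ^ 2 / (4 * t))) := by
        rw [mul_comm, ENNReal.ofReal_mul (by positivity)]

theorem gaussian_tail_of_exponential_volume_growth
    {X : Type*} [MetricSpace X] [MeasurableSpace X] [OpensMeasurableSpace X]
    (μ : Measure X) (x : X) (C : ℝ) (hC : 1 ≤ C)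
    (hvol : ∀ s : ℝ, 0 < s → μ (Metric.ball x s) ≤ ENNReal.ofReal (C * Real.exp (C * s)))
    (T : ℝ) (hT : 0 < T) :
    ∃ C' : ℝ, 0 < C' ∧ ∀ t : ℝ, 0 < t → t ≤ T → ∀ r : ℝ, 1 ≤ r →
      ∫⁻ y in (Metric.ball x r)ᶜ, ENNReal.ofReal (Real.exp (-(dist x y) ^ 2 / (2 * t))) ∂μ
        ≤ ENNReal.ofReal (C' * Real.exp (-r ^ 2 / (4 * t))) :=
  gaussian_tail_of_exponential_volume_growth_general μ x C hvol T hT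
end
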